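/- arXiv:1106.5163 — 2 statements merged into one kernel-verified Lean document; each statement's English description precedes it below -/
import Mathlib

section
/- Let R be an irreducible locally finite root system. Then the semi-divisible subsystem R_sdiv := (R \ {α ∈ R | 2α ∈ R}) ∪ {0} is a closed subsystem of R, i.e., R_sdiv contains 0, is stable under the reflections s_α for α ∈ R_sdiv \ {0}, and (R_sdiv + R_sdiv) ∩ R ⊆ R_sdiv. -/
/-- A locally finite root system `R` in a nonzero vector space `U` over a field
of characteristic zero, with coroot map `coroot : U → U*`. -/
structure IsLFRootSystem (F : Type*) [Field F] {U : Type*} [AddCommGroup U] [Module F U]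
    (R : Set U) (coroot : U → Module.Dual F U) : Prop where
  nontrivial : ∃ u : U, u ≠ 0
  locallyFinite : ∀ W : Submodule F U, FiniteDimensional F W → (R ∩ (W : Set U)).Finite
  zero_mem : (0 : U) ∈ R
  spans : Submodule.span F R = ⊤
  coroot_zero : coroot 0 = 0
  coroot_self : ∀ α ∈ R, α ≠ 0 → coroot α α = 2
  reflect_mem : ∀ α ∈ R, α ≠ 0 → ∀ β ∈ R, β - coroot α β • α ∈ R
  integral : ∀ α ∈ R, ∀ β ∈ R, ∃ n : ℤ, coroot α β = (n : F)

/-- Two nonzero roots `α, β` are connected if there is a finite chain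
`α = c 0, …, c N = β` of roots with `(c (i+1))ˇ (c i) ≠ 0` for all `i`. -/
def LFConnected {F U : Type*} [Field F] [AddCommGroup U] [Module F U]
    (R : Set U) (coroot : U → Module.Dual F U) (α β : U) : Prop :=
  ∃ (N : ℕ) (c : Fin (N + 1) → U), c 0 = α ∧ c (Fin.last N) = β ∧
    (∀ i, c i ∈ R) ∧ ∀ i : Fin N, coroot (c i.succ) (c i.castSucc) ≠ 0


set_option linter.unusedSectionVars false

private def cheb (t : ℤ) : ℕ → ℤ
  | 0 => 0
  | 1 => 1
  | (j+2) => t * cheb t (j+1) - cheb t j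

private lemma cheb_step (t : ℤ) (j : ℕ) :
    cheb t (j+2) = t * cheb t (j+1) - cheb t j := rfl

private lemma cheb_abs_lt {t : ℤ} (ht : 3 ≤ |t|) : ∀ j, |cheb t j| < |cheb t (j+1)| := by
  intro j
  induction j with
  | zero => simp [cheb]
  | succ j ih =>
    have h1 : |t * cheb t (j+1)| - |cheb t j| ≤ |t * cheb t (j+1) - cheb t j| :=
      abs_sub_abs_le_abs_sub _ _
    rw [abs_mul] at h1
    have h2 : 3 * |cheb t (j+1)| ≤ |t| * |cheb t (j+1)| :=
      mul_le_mul_of_nonneg_right ht (abs_nonneg _)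
    have h3 := abs_nonneg (cheb t (j+1))
    rw [cheb_step]
    linarith

private lemma cheb_two_pair : ∀ j : ℕ, cheb 2 j = j ∧ cheb 2 (j+1) = j+1 := by
  intro j
  induction j with
  | zero => refine ⟨rfl, rfl⟩
  | succ j ih =>
    refine ⟨ih.2, ?_⟩
    rw [cheb_step, ih.1, ih.2]
    push_cast
    ring

private lemma cheb_neg_two_pair :
    ∀ j : ℕ, cheb (-2) j = (-1)^(j+1) * j ∧ cheb (-2) (j+1) = (-1)^(j+2) * (j+1) := by
  intro j
  induction j with
  | zero => norm_num [cheb]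
  | succ j ih =>
    refine ⟨ih.2, ?_⟩
    rw [cheb_step, ih.1, ih.2]
    push_cast
    ring

section Aux

variable {F U : Type*} [Field F] [CharZero F] [AddCommGroup U] [Module F U]
  {R : Set U} {coroot : U → Module.Dual F U}

lemma IsLFRootSystem.orbit_eq (h : IsLFRootSystem F R coroot) {v w : U} (f : ℕ → U)
    (hfR : ∀ j, f j ∈ R) (hfW : ∀ j, f j ∈ Submodule.span F ({v, w} : Set U)) :
    ∃ i j : ℕ, i < j ∧ f i = f j := by
  have : FiniteDimensional F (Submodule.span F ({v, w} : Set U)) :=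
    FiniteDimensional.span_of_finite F (Set.toFinite _)
  have hfin : (R ∩ (Submodule.span F ({v, w} : Set U) : Set U)).Finite :=
    h.locallyFinite _ this
  exact hfin.exists_lt_map_eq_of_forall_mem (fun j => Set.mem_inter (hfR j) (hfW j))

lemma IsLFRootSystem.coroot_eq (h : IsLFRootSystem F R coroot) {α : U} (hαR : α ∈ R)
    (hα0 : α ≠ 0) {c' : Module.Dual F U} (hc2 : c' α = 2)
    (hrefl : ∀ β ∈ R, β - c' β • α ∈ R) {β : U} (hβ : β ∈ R) :
    coroot α β = c' β := by
  by_contra hne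
  have hf0 : c' β - coroot α β ≠ 0 := sub_ne_zero.2 fun e => hne e.symm
  have hca : coroot α α = 2 := h.coroot_self α hαR hα0
  have key : ∀ j : ℕ, β + ((j : F) * (c' β - coroot α β)) • α ∈ R := by
    intro j
    induction j with
    | zero => simpa using hβ
    | succ j ih =>
      have h1 := hrefl _ ih
      have h2 := h.reflect_mem α hαR hα0 _ h1
      have e1 : c' (β + ((j:F) * (c' β - coroot α β)) • α)
          = c' β + (j:F) * (c' β - coroot α β) * 2 := by
        simp [map_add, map_smul, hc2, smul_eq_mul]
      have e2 : coroot α (β + ((j:F) * (c' β - coroot α β)) • α)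
          = coroot α β + (j:F) * (c' β - coroot α β) * 2 := by
        simp [map_add, map_smul, hca, smul_eq_mul]
      have e3 : coroot α ((β + ((j:F) * (c' β - coroot α β)) • α)
            - c' (β + ((j:F) * (c' β - coroot α β)) • α) • α)
          = coroot α β + (j:F) * (c' β - coroot α β) * 2
            - (c' β + (j:F) * (c' β - coroot α β) * 2) * 2 := by
        rw [map_sub, map_smul, e1, e2, hca, smul_eq_mul]
      have e4 : (β + ((j:F) * (c' β - coroot α β)) • α)
            - c' (β + ((j:F) * (c' β - coroot α β)) • α) • α
            - coroot α ((β + ((j:F) * (c' β - coroot α β)) • α)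
                - c' (β + ((j:F) * (c' β - coroot α β)) • α) • α) • α
          = β + (((j:ℕ)+1 : F) * (c' β - coroot α β)) • α := by
        rw [e3, e1]
        module
      rw [e4] at h2
      convert h2 using 3
      push_cast
      ring
  obtain ⟨i, j, hij, hEq⟩ := h.orbit_eq (v := β) (w := α) _ key
    (fun j => Submodule.add_mem _ (Submodule.subset_span (by simp))
      (Submodule.smul_mem _ _ (Submodule.subset_span (by simp))))
  have h5 : ((i:F) * (c' β - coroot α β)) • α = ((j:F) * (c' β - coroot α β)) • α :=
    add_left_cancel hEq
  have h6 : ((i:F) * (c' β - coroot α β) - (j:F) * (c' β - coroot α β)) • α = 0 := by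
    rw [sub_smul, h5, sub_self]
  rcases smul_eq_zero.mp h6 with h7 | h7
  · have : (i:F) = (j:F) := by
      have := sub_eq_zero.mp h7
      exact mul_right_cancel₀ hf0 this
    exact hij.ne (Nat.cast_injective this)
  · exact hα0 h7

private lemma cheb_zero (t : ℤ) : cheb t 0 = 0 := rfl

private lemma cheb_one (t : ℤ) : cheb t 1 = 1 := rfl

private lemma cheb_two (j : ℕ) : cheb 2 j = j := (cheb_two_pair j).1

private lemma cheb_neg_two (j : ℕ) : cheb (-2) j = (-1)^(j+1) * j := (cheb_neg_two_pair j).1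

section Aux

variable {F U : Type*} [Field F] [CharZero F] [AddCommGroup U] [Module F U]
  {R : Set U} {coroot : U → Module.Dual F U}

lemma IsLFRootSystem.neg_mem (h : IsLFRootSystem F R coroot) {α : U} (hα : α ∈ R)
    (hα0 : α ≠ 0) : -α ∈ R := by
  have h1 := h.reflect_mem α hα hα0 α hα
  rwa [h.coroot_self α hα hα0, show α - (2:F) • α = -α by module] at h1

lemma IsLFRootSystem.pairing_even (h : IsLFRootSystem F R coroot) {γ : U} (hγ : γ ∈ R)
    (hγ0 : γ ≠ 0) (h2γ : (2:F) • γ ∈ R) {β : U} (hβ : β ∈ R) :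
    ∃ p : ℤ, coroot γ β = ((2 * p : ℤ) : F) ∧ coroot ((2:F) • γ) β = (p : F) := by
  have h2γ0 : (2:F) • γ ≠ 0 := smul_ne_zero two_ne_zero hγ0
  obtain ⟨p, hp⟩ := h.integral _ h2γ _ hβ
  refine ⟨p, ?_, hp⟩
  have hsc : coroot ((2:F) • γ) γ = 1 := by
    have h1 : coroot ((2:F) • γ) ((2:F) • γ) = 2 := h.coroot_self _ h2γ h2γ0
    rw [map_smul, smul_eq_mul] at h1
    have := mul_left_cancel₀ (two_ne_zero (α := F)) (by rw [h1]; ring : (2:F) * coroot ((2:F) • γ) γ = 2 * 1)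
    exact this
  have hcu := h.coroot_eq hγ hγ0 (c' := (2:F) • coroot ((2:F) • γ)) ?_ ?_ hβ
  · rw [hcu, LinearMap.smul_apply, smul_eq_mul, hp]
    push_cast
    ring
  · rw [LinearMap.smul_apply, smul_eq_mul, hsc]
    norm_num
  · intro β' hβ'
    have h1 := h.reflect_mem _ h2γ h2γ0 β' hβ'
    have e : β' - ((2:F) • coroot ((2:F) • γ)) β' • γ
        = β' - coroot ((2:F) • γ) β' • ((2:F) • γ) := by
      rw [LinearMap.smul_apply, smul_eq_mul, smul_smul, mul_comm]
    rw [e]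
    exact h1


lemma IsLFRootSystem.pairing_bound (h : IsLFRootSystem F R coroot) {α β : U}
    (hα : α ∈ R) (hα0 : α ≠ 0) (hβ : β ∈ R) (hβ0 : β ≠ 0)
    (hind : ∀ s t : F, s • α + t • β = 0 → s = 0 ∧ t = 0)
    {m n : ℤ} (hm : coroot β α = (m : F)) (hn : coroot α β = (n : F)) :
    (m = 0 ∧ n = 0) ∨ (1 ≤ m * n ∧ m * n ≤ 3) := by
  have hca : coroot α α = 2 := h.coroot_self α hα hα0
  have hcb : coroot β β = 2 := h.coroot_self β hβ hβ0
  set Sa : U →ₗ[F] U := LinearMap.id - (coroot α).smulRight α with hSa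
  set Sb : U →ₗ[F] U := LinearMap.id - (coroot β).smulRight β with hSb
  set u : U →ₗ[F] U := Sa ∘ₗ Sb with hu
  have hSa_def : ∀ v, Sa v = v - coroot α v • α := by
    intro v; simp [hSa]
  have hSb_def : ∀ v, Sb v = v - coroot β v • β := by
    intro v; simp [hSb]
  have hu_def : ∀ v, u v = Sa (Sb v) := by
    intro v; simp [hu]
  -- Sa, Sb are involutions
  have hSaSa : ∀ v, Sa (Sa v) = v := by
    intro v
    rw [hSa_def, hSa_def, map_sub, map_smul, hca, smul_eq_mul]
    module
  have hSbSb : ∀ v, Sb (Sb v) = v := by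
    intro v
    rw [hSb_def, hSb_def, map_sub, map_smul, hcb, smul_eq_mul]
    module
  have huinj : Function.Injective u := by
    have : Function.LeftInverse (fun v => Sb (Sa v)) u := by
      intro v
      show Sb (Sa (u v)) = v
      rw [hu_def v, hSaSa, hSbSb]
    exact this.injective
  -- u maps R to R
  have huR : ∀ v ∈ R, u v ∈ R := by
    intro v hv
    rw [hu_def, hSb_def, hSa_def]
    exact h.reflect_mem α hα hα0 _ (h.reflect_mem β hβ hβ0 v hv)
  have hiterR : ∀ (w : U), w ∈ R → ∀ j, (⇑u)^[j] w ∈ R := by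
    intro w hw j
    induction j with
    | zero => simpa using hw
    | succ j ih => rw [Function.iterate_succ_apply']; exact huR _ ih
  -- u maps the span of {α, β} to itself
  have hαW : α ∈ Submodule.span F ({α, β} : Set U) := Submodule.subset_span (by simp)
  have hβW : β ∈ Submodule.span F ({α, β} : Set U) := Submodule.subset_span (by simp)
  have huW : ∀ v ∈ Submodule.span F ({α, β} : Set U), u v ∈ Submodule.span F ({α, β} : Set U) := by
    intro v hv
    rw [hu_def, hSb_def, hSa_def]
    exact Submodule.sub_mem _ (Submodule.sub_mem _ hv (Submodule.smul_mem _ _ hβW))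
      (Submodule.smul_mem _ _ hαW)
  have hiterW : ∀ (w : U), w ∈ Submodule.span F ({α, β} : Set U) →
      ∀ j, (⇑u)^[j] w ∈ Submodule.span F ({α, β} : Set U) := by
    intro w hw j
    induction j with
    | zero => simpa using hw
    | succ j ih => rw [Function.iterate_succ_apply']; exact huW _ ih
  -- periodicity
  have hper : ∀ (w : U), w ∈ R → w ∈ Submodule.span F ({α, β} : Set U) →
      ∃ k : ℕ, 1 ≤ k ∧ (⇑u)^[k] w = w := by
    intro w hw hwW
    obtain ⟨i, j, hij, hEq⟩ := h.orbit_eq (v := α) (w := β) (fun j => (⇑u)^[j] w)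
      (hiterR w hw) (hiterW w hwW)
    refine ⟨j - i, by omega, ?_⟩
    have hj : j = i + (j - i) := by omega
    rw [hj, Function.iterate_add_apply] at hEq
    exact (huinj.iterate i hEq).symm
  obtain ⟨k₁, hk₁1, hk₁⟩ := hper α hα hαW
  obtain ⟨k₂, hk₂1, hk₂⟩ := hper β hβ hβW
  have hfixmul : ∀ (kk : ℕ) (w : U), (⇑u)^[kk] w = w → ∀ s : ℕ, (⇑u)^[kk * s] w = w := by
    intro kk w hw s
    rw [Function.iterate_mul]
    induction s with
    | zero => rfl
    | succ s ih => rw [Function.iterate_succ_apply', ih, hw]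
  have hfixα : (⇑u)^[k₁ * k₂] α = α := hfixmul k₁ α hk₁ k₂
  have hfixβ : (⇑u)^[k₁ * k₂] β = β := by
    rw [mul_comm]
    exact hfixmul k₂ β hk₂ k₁
  -- explicit formulas
  have huα : u α = ((m * n - 1 : ℤ) : F) • α - (m : F) • β := by
    rw [hu_def, hSb_def, hSa_def, hm, map_sub, map_smul, hca, hn, smul_eq_mul]
    push_cast
    module
  have huβ : u β = (n : F) • α - β := by
    rw [hu_def, hSb_def, hSa_def, hcb, map_sub, map_smul, hn]
    simp only [smul_eq_mul]
    module
  have huuα : u (u α) = ((m * n - 2 : ℤ) : F) • u α - α := by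
    conv_lhs => rw [huα]
    rw [map_sub, map_smul, map_smul, huα, huβ]
    push_cast
    module
  have huuβ : u (u β) = ((m * n - 2 : ℤ) : F) • u β - β := by
    conv_lhs => rw [huβ]
    rw [map_sub, map_smul, huα, huβ]
    push_cast
    module
  -- Chebyshev identity
  have identα : ∀ j : ℕ, (⇑u)^[j+1] α
      = ((cheb (m*n-2) (j+1) : ℤ) : F) • u α - ((cheb (m*n-2) j : ℤ) : F) • α := by
    intro j
    induction j with
    | zero =>
      rw [cheb_one, cheb_zero]
      simp
    | succ j ih =>
      rw [Function.iterate_succ_apply', ih, map_sub, map_smul, map_smul, huuα, cheb_step]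
      push_cast
      module
  have identβ : ∀ j : ℕ, (⇑u)^[j+1] β
      = ((cheb (m*n-2) (j+1) : ℤ) : F) • u β - ((cheb (m*n-2) j : ℤ) : F) • β := by
    intro j
    induction j with
    | zero =>
      rw [cheb_one, cheb_zero]
      simp
    | succ j ih =>
      rw [Function.iterate_succ_apply', ih, map_sub, map_smul, map_smul, huuβ, cheb_step]
      push_cast
      module
  -- extract integer equations
  have hpos : 1 ≤ k₁ * k₂ := Nat.mul_pos hk₁1 hk₂1
  obtain ⟨k', hk'⟩ : ∃ k', k₁ * k₂ = k' + 1 := ⟨k₁ * k₂ - 1, by omega⟩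
  rw [hk'] at hfixα hfixβ
  have Eα : ((cheb (m*n-2) (k'+1) : ℤ) : F) • u α - ((cheb (m*n-2) k' : ℤ) : F) • α = α := by
    rw [← identα k']; exact hfixα
  have Eβ : ((cheb (m*n-2) (k'+1) : ℤ) : F) • u β - ((cheb (m*n-2) k' : ℤ) : F) • β = β := by
    rw [← identβ k']; exact hfixβ
  set c1 := cheb (m*n-2) (k'+1) with hc1def
  set c0 := cheb (m*n-2) k' with hc0def
  have Cα : (((c1 * (m*n-1) - c0 - 1 : ℤ)) : F) • α + (((-(c1 * m)) : ℤ) : F) • β = 0 := by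
    have e : (((c1 * (m*n-1) - c0 - 1 : ℤ)) : F) • α + (((-(c1 * m)) : ℤ) : F) • β
        = (((c1 : ℤ) : F) • u α - ((c0 : ℤ) : F) • α) - α := by
      rw [huα]
      push_cast
      module
    rw [Eα, sub_self] at e
    exact e
  have Cβ : (((c1 * n : ℤ)) : F) • α + (((-c1 - c0 - 1 : ℤ)) : F) • β = 0 := by
    have e : (((c1 * n : ℤ)) : F) • α + (((-c1 - c0 - 1 : ℤ)) : F) • β
        = (((c1 : ℤ) : F) • u β - ((c0 : ℤ) : F) • β) - β := by
      rw [huβ]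
      push_cast
      module
    rw [Eβ, sub_self] at e
    exact e
  obtain ⟨eα1, eα2⟩ := hind _ _ Cα
  obtain ⟨eβ1, eβ2⟩ := hind _ _ Cβ
  have g1 : c1 * m = 0 := by exact_mod_cast neg_eq_zero.mp (by exact_mod_cast eα2)
  have g2 : c1 * n = 0 := by exact_mod_cast eβ1
  have g3 : -c1 - c0 - 1 = 0 := by exact_mod_cast eβ2
  by_cases hc1 : c1 = 0
  · -- degenerate: bound |m*n - 2|
    have hc0 : c0 = -1 := by omega
    have habs : |m*n - 2| ≤ 2 := by
      by_contra hB
      have hB3 : 3 ≤ |m*n-2| := by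
        have := not_le.mp hB
        omega
      have hlt := cheb_abs_lt hB3 k'
      rw [← hc1def, ← hc0def, hc0, hc1] at hlt
      norm_num at hlt
    have ht2 : m * n - 2 ≠ 2 := by
      intro he
      rw [hc1def, he, cheb_two] at hc1
      omega
    have ht2' : m * n - 2 ≠ -2 := by
      intro he
      rw [hc1def, he, cheb_neg_two] at hc1
      rcases mul_eq_zero.mp hc1 with h7 | h7
      · have := pow_eq_zero_iff (n := k'+1+1) (by omega) |>.mp h7
        norm_num at this
      · omega
    rw [abs_le] at habs
    right
    omega
  · left
    exact ⟨by rcases mul_eq_zero.mp g1 with h7 | h7; exact absurd h7 hc1; exact h7,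
      by rcases mul_eq_zero.mp g2 with h7 | h7; exact absurd h7 hc1; exact h7⟩


lemma IsLFRootSystem.not_mult_sum (h : IsLFRootSystem F R coroot) {x y : U}
    (hx : x ∈ R) (hx0 : x ≠ 0) (hy : y ∈ R) (hy0 : y ≠ 0)
    (hxyR : x + y ∈ R) (hxy0 : x + y ≠ 0)
    (h2x : (2:F) • x ∉ R) (h2y : (2:F) • y ∉ R) : (2:F) • (x + y) ∉ R := by
  intro h2γ
  set γ := x + y with hγdef
  have hγ : γ ∈ R := hxyR
  have hγ0 : γ ≠ 0 := hxy0
  have h2γ0 : (2:F) • γ ≠ 0 := smul_ne_zero two_ne_zero hγ0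
  have hyeq : y = γ - x := by rw [hγdef]; abel
  have hxeq : x = γ - y := by rw [hγdef]; abel
  have hsc : coroot ((2:F) • γ) γ = 1 := by
    have h1 : coroot ((2:F) • γ) ((2:F) • γ) = 2 := h.coroot_self _ h2γ h2γ0
    rw [map_smul, smul_eq_mul] at h1
    exact mul_left_cancel₀ (two_ne_zero (α := F)) (by rw [h1]; ring)
  have hneg2γ : -((2:F) • γ) ∈ R := h.neg_mem h2γ h2γ0
  by_cases hdep : ∃ lam : F, x = lam • γ
  · -- x is a multiple of γ
    obtain ⟨lam, hlam⟩ := hdep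
    obtain ⟨p, hp⟩ := h.integral _ h2γ _ hx
    have hplam : lam = (p : F) := by
      rw [hlam, map_smul, smul_eq_mul, hsc, mul_one] at hp
      exact hp
    obtain ⟨n₁, hn₁⟩ := h.integral _ hx _ hγ
    have hpn : p * n₁ = 2 := by
      have h1 : coroot x (lam • γ) = 2 := by
        rw [← hlam]
        exact h.coroot_self x hx hx0
      rw [map_smul, smul_eq_mul, hplam, hn₁] at h1
      exact_mod_cast h1
    have hp0 : p ≠ 0 := by
      intro he
      apply hx0
      rw [hlam, hplam, he]
      simp
    have hdvd : p ∣ 2 := ⟨n₁, hpn.symm⟩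
    have hple : p ≤ 2 := Int.le_of_dvd (by norm_num) hdvd
    have hpge : -2 ≤ p := by
      have := Int.le_of_dvd (b := 2) (by norm_num) ((neg_dvd).mpr hdvd)
      omega
    interval_cases p
    · -- p = -2 : y = 3γ, contradiction with integrality
      obtain ⟨n₂, hn₂⟩ := h.integral _ hy _ hγ
      have hy3 : y = (3:F) • γ := by
        rw [hyeq, hlam, hplam]
        push_cast
        module
      have h1 : coroot y ((3:F) • γ) = 2 := by
        rw [← hy3]
        exact h.coroot_self y hy hy0
      rw [map_smul, smul_eq_mul, hn₂] at h1
      have : (3 * n₂ : ℤ) = (2 : ℤ) := by exact_mod_cast h1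
      omega
    · -- p = -1 : 2x = -(2γ) ∈ R
      apply h2x
      have : (2:F) • x = -((2:F) • γ) := by
        rw [hlam, hplam]
        push_cast
        module
      rw [this]
      exact hneg2γ
    · exact absurd rfl hp0
    · -- p = 1 : x = γ, y = 0
      apply hy0
      rw [hyeq, hlam, hplam]
      push_cast
      module
    · -- p = 2 : y = -γ, 2y = -(2γ) ∈ R
      apply h2y
      have : (2:F) • y = -((2:F) • γ) := by
        rw [hyeq, hlam, hplam]
        push_cast
        module
      rw [this]
      exact hneg2γ
  · -- x and γ are independent
    have hindx : ∀ s t : F, s • γ + t • x = 0 → s = 0 ∧ t = 0 := by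
      intro s t hst
      by_cases ht : t = 0
      · refine ⟨?_, ht⟩
        rw [ht, zero_smul, add_zero] at hst
        exact (smul_eq_zero.mp hst).resolve_right hγ0
      · exfalso
        apply hdep
        refine ⟨-(s/t), ?_⟩
        have h9 : t • x = -(s • γ) := by
          rw [eq_neg_iff_add_eq_zero, add_comm]
          exact hst
        have h10 : x = t⁻¹ • (t • x) := (inv_smul_smul₀ ht x).symm
        rw [h10, h9, smul_neg, smul_smul, ← neg_smul]
        congr 1
        rw [div_eq_mul_inv]
        ring
    have hindy : ∀ s t : F, s • γ + t • y = 0 → s = 0 ∧ t = 0 := by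
      intro s t hst
      by_cases ht : t = 0
      · refine ⟨?_, ht⟩
        rw [ht, zero_smul, add_zero] at hst
        exact (smul_eq_zero.mp hst).resolve_right hγ0
      · exfalso
        apply hdep
        refine ⟨(s + t)/t, ?_⟩
        have hx' : t • x = (s + t) • γ := by
          rw [hyeq] at hst
          rw [add_smul]
          have : s • γ + t • (γ - x) = 0 := hst
          rw [smul_sub] at this
          have h9 : s • γ + t • γ - t • x = 0 := by
            rw [← this]; abel
          have := sub_eq_zero.mp h9
          rw [← this]
        have h10 : x = t⁻¹ • (t • x) := (inv_smul_smul₀ ht x).symm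
        rw [h10, hx', smul_smul]
        congr 1
        rw [div_eq_mul_inv]
        ring
    obtain ⟨p, hpγ, hp2γ⟩ := h.pairing_even hγ hγ0 h2γ hx
    obtain ⟨q, hqγ, hq2γ⟩ := h.pairing_even hγ hγ0 h2γ hy
    have hpq : p + q = 1 := by
      have h1 : coroot γ γ = 2 := h.coroot_self γ hγ hγ0
      have h2 : coroot γ γ = coroot γ x + coroot γ y := by
        rw [hγdef, map_add]
      rw [h1, hpγ, hqγ] at h2
      have h3 : (2*p + 2*q : ℤ) = 2 := by exact_mod_cast h2.symm
      omega
    obtain ⟨a', ha'⟩ := h.integral _ hx _ hγ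
    obtain ⟨b', hb'⟩ := h.integral _ hy _ hγ
    by_cases ha1 : a' = 1
    · -- reflection of 2γ by x gives 2y ∈ R
      apply h2y
      have h1 := h.reflect_mem x hx hx0 _ h2γ
      have e : (2:F) • γ - coroot x ((2:F) • γ) • x = (2:F) • y := by
        rw [map_smul, smul_eq_mul, ha', ha1, hyeq]
        push_cast
        module
      rwa [e] at h1
    by_cases hb1 : b' = 1
    · apply h2x
      have h1 := h.reflect_mem y hy hy0 _ h2γ
      have e : (2:F) • γ - coroot y ((2:F) • γ) • y = (2:F) • x := by
        rw [map_smul, smul_eq_mul, hb', hb1, hxeq]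
        push_cast
        module
      rwa [e] at h1
    -- now apply the pairing bound to (γ, x) and (γ, y)
    have hx2 : (2:F) • x ≠ 0 := smul_ne_zero two_ne_zero hx0
    have hbx := h.pairing_bound hγ hγ0 hx hx0 hindx ha' (by rw [hpγ])
    have hby := h.pairing_bound hγ hγ0 hy hy0 hindy hb' (by rw [hqγ])
    have hpcase : p = 0 ∨ p = -1 := by
      rcases hbx with ⟨h7, h8⟩ | ⟨h7, h8⟩
      · left; omega
      · have h9 : a' * (2 * p) = 2 * (a' * p) := by ring
        have h10 : a' * p = 1 := by omega
        rcases Int.mul_eq_one_iff_eq_one_or_neg_one.mp h10 with ⟨h11, h12⟩ | ⟨h11, h12⟩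
        · exact absurd h11 ha1
        · right; exact h12
    have hqcase : q = 0 ∨ q = -1 := by
      rcases hby with ⟨h7, h8⟩ | ⟨h7, h8⟩
      · left; omega
      · have h9 : b' * (2 * q) = 2 * (b' * q) := by ring
        have h10 : b' * q = 1 := by omega
        rcases Int.mul_eq_one_iff_eq_one_or_neg_one.mp h10 with ⟨h11, h12⟩ | ⟨h11, h12⟩
        · exact absurd h11 hb1
        · right; exact h12
    omega

end Aux

end Aux

/-- for an irreducible locally finite root system `R`, the
semi-divisible subsystem `R_sdiv = (R \ {α | 2α ∈ R}) ∪ {0}` is a closed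
subsystem of `R`: it contains `0`, is stable under the reflections `s_α` for
nonzero `α ∈ R_sdiv`, and `(R_sdiv + R_sdiv) ∩ R ⊆ R_sdiv`. -/
theorem stmt_3 {F U : Type*} [Field F] [CharZero F] [AddCommGroup U] [Module F U]
    {R : Set U} {coroot : U → Module.Dual F U}
    (h : IsLFRootSystem F R coroot)
    (hirr : ∀ α ∈ R, α ≠ 0 → ∀ β ∈ R, β ≠ 0 → LFConnected R coroot α β) :
    (0 : U) ∈ (R \ {α : U | (2 : F) • α ∈ R}) ∪ {0} ∧
    (∀ α ∈ (R \ {α : U | (2 : F) • α ∈ R}) ∪ {0}, α ≠ 0 →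
      ∀ β ∈ (R \ {α : U | (2 : F) • α ∈ R}) ∪ {0},
        β - coroot α β • α ∈ (R \ {α : U | (2 : F) • α ∈ R}) ∪ {0}) ∧
    (∀ x ∈ (R \ {α : U | (2 : F) • α ∈ R}) ∪ {0},
      ∀ y ∈ (R \ {α : U | (2 : F) • α ∈ R}) ∪ {0},
        x + y ∈ R → x + y ∈ (R \ {α : U | (2 : F) • α ∈ R}) ∪ {0}) := by
  classical
  refine ⟨Set.mem_union_right _ rfl, ?_, ?_⟩
  · intro α hα hα0 β hβ
    have hαR : α ∈ R := by
      rcases hα with h1 | h1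
      · exact h1.1
      · exact absurd h1 hα0
    have hα2 : (2:F) • α ∉ R := by
      rcases hα with h1 | h1
      · exact h1.2
      · exact absurd h1 hα0
    rcases hβ with hβ1 | hβ1
    · by_cases hs0 : β - coroot α β • α = 0
      · exact Set.mem_union_right _ hs0
      · refine Set.mem_union_left _ ⟨h.reflect_mem α hαR hα0 β hβ1.1, ?_⟩
        intro habs
        have h2 := h.reflect_mem α hαR hα0 _ habs
        have e : (2:F) • (β - coroot α β • α)
            - coroot α ((2:F) • (β - coroot α β • α)) • α = (2:F) • β := by
          rw [map_smul, map_sub, map_smul, h.coroot_self α hαR hα0]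
          simp only [smul_eq_mul]
          module
        rw [e] at h2
        exact hβ1.2 h2
    · have hβ0 : β = 0 := hβ1
      refine Set.mem_union_right _ ?_
      show β - coroot α β • α = 0
      rw [hβ0, map_zero, zero_smul, sub_zero]
  · intro x hx y hy hxyR
    rcases hx with hx1 | hx1
    · rcases hy with hy1 | hy1
      · by_cases hxy0 : x + y = 0
        · exact Set.mem_union_right _ hxy0
        · have hx0 : x ≠ 0 := by
            intro he
            apply hx1.2
            show (2:F) • x ∈ R
            rw [he, smul_zero]
            exact h.zero_mem
          have hy0 : y ≠ 0 := by
            intro he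
            apply hy1.2
            show (2:F) • y ∈ R
            rw [he, smul_zero]
            exact h.zero_mem
          exact Set.mem_union_left _
            ⟨hxyR, h.not_mult_sum hx1.1 hx0 hy1.1 hy0 hxyR hxy0 hx1.2 hy1.2⟩
      · have hy0 : y = 0 := hy1
        rw [show x + y = x by rw [hy0, add_zero]]
        exact Set.mem_union_left _ hx1
    · have hx0 : x = 0 := hx1
      rw [show x + y = y by rw [hx0, zero_add]]
      exact hy
end

section
/- Let 𝒢 be a locally finite split simple Lie algebra with splitting Cartan subalgebra ℋ and root system R (a reduced irreducible locally finite root system). Let S be an irreducible closed subsystem of R, set 𝔤 := ⊕_{α ∈ S^× } 𝒢_α ⊕ Σ_{α ∈ S^×}[𝒢_α, 𝒢_{−α}] and 𝔥 := ℋ ∩ 𝔤. Then the restriction map π : ℋ* → 𝔥*, f ↦ f|_𝔥, is injective on S. -/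
/-- Weight space of a module over a Lie algebra with respect to a subalgebra. -/
def wtSpace {F G V : Type*} [Field F] [LieRing G] [LieAlgebra F G]
    [AddCommGroup V] [Module F V] [LieRingModule G V] [LieModule F G V]
    (H : LieSubalgebra F G) (χ : Module.Dual F H) : Submodule F V where
  carrier := {v | ∀ h : H, ⁅(h : G), v⁆ = χ h • v}
  add_mem' := by
    intro a b ha hb h
    rw [lie_add, ha h, hb h, smul_add]
  zero_mem' := by
    intro h
    simp
  smul_mem' := by
    intro c v hv h
    rw [lie_smul, hv h, smul_comm]

section Aux

variable {F G : Type*} [Field F] [LieRing G] [LieAlgebra F G]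

lemma mem_wtSpace_iff (H : LieSubalgebra F G) (χ : Module.Dual F H) (v : G) :
    v ∈ (wtSpace H χ : Submodule F G) ↔ ∀ h : H, ⁅(h : G), v⁆ = χ h • v := Iff.rfl

lemma wtSpace_lie (H : LieSubalgebra F G) (a b : Module.Dual F H) {u v : G}
    (hu : u ∈ (wtSpace H a : Submodule F G)) (hv : v ∈ (wtSpace H b : Submodule F G)) :
    ⁅u, v⁆ ∈ (wtSpace H (a + b) : Submodule F G) := by
  rw [mem_wtSpace_iff] at *
  intro h
  rw [leibniz_lie, hu h, hv h, smul_lie, lie_smul, LinearMap.add_apply, add_smul]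

lemma wtSpace_zero_le (H : LieSubalgebra F G) [H.IsCartanSubalgebra] {v : G}
    (hv : v ∈ (wtSpace H (0 : Module.Dual F H) : Submodule F G)) : v ∈ H := by
  rw [mem_wtSpace_iff] at hv
  have : v ∈ H.normalizer := by
    rw [LieSubalgebra.mem_normalizer_iff]
    intro y hy
    have := hv ⟨y, hy⟩
    simp only [LinearMap.zero_apply, zero_smul] at this
    rw [← lie_skew, this, neg_zero]
    exact H.zero_mem
  rwa [LieSubalgebra.IsCartanSubalgebra.self_normalizing] at this

lemma sl2_aux [CharZero F] (H : LieSubalgebra F G)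
    (hlocfin : ∀ s : Finset G, FiniteDimensional F (LieSubalgebra.lieSpan F G (s : Set G)))
    (a b : Module.Dual F H) (e f : G) (h : H)
    (he : e ∈ (wtSpace H a : Submodule F G)) (hf : f ∈ (wtSpace H (-a) : Submodule F G))
    (hef : ⁅e, f⁆ = (h : G)) (ha2 : a h = 2)
    (x : G) (hx : x ∈ (wtSpace H b : Submodule F G)) (hx0 : x ≠ 0)
    (hfx : ⁅f, x⁆ = 0) :
    ∃ n : ℕ, b h = -(n : F) := by
  classical
  set X : ℕ → G := fun k => ((LieAlgebra.ad F G e) ^ k) x with hXdef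
  have hX0 : X 0 = x := by simp [hXdef]
  have hXs : ∀ k, X (k + 1) = ⁅e, X k⁆ := by
    intro k
    simp [hXdef, pow_succ']
  -- weights
  have hmem : ∀ k, X k ∈ (wtSpace H (b + (k : ℕ) • a) : Submodule F G) := by
    intro k
    induction k with
    | zero => simpa [hX0] using hx
    | succ k ih =>
      rw [hXs]
      have := wtSpace_lie H a (b + (k : ℕ) • a) he ih
      have heq : a + (b + (k : ℕ) • a) = b + (k + 1 : ℕ) • a := by
        rw [succ_nsmul]
        abel
      rwa [heq] at this
  have hadh : ∀ k, ⁅(h : G), X k⁆ = (b h + 2 * (k : F)) • X k := by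
    intro k
    have := (mem_wtSpace_iff H _ _).mp (hmem k) h
    rw [this]
    congr 1
    simp [nsmul_eq_mul, ha2]
    ring
  -- find n with X n = 0
  have hex : ∃ k, X k = 0 := by
    by_contra hall
    push_neg at hall
    set L := LieSubalgebra.lieSpan F G ({e, x} : Set G) with hL
    have hfd : FiniteDimensional F L := by
      have h1 := hlocfin ({e, x} : Finset G)
      have h2 : ((({e, x} : Finset G) : Set G)) = ({e, x} : Set G) := by simp
      rw [h2] at h1
      exact h1
    have hXL : ∀ k, X k ∈ L := by
      intro k
      induction k with
      | zero => rw [hX0]; exact LieSubalgebra.subset_lieSpan (by simp)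
      | succ k ih =>
        rw [hXs]
        exact L.lie_mem (LieSubalgebra.subset_lieSpan (by simp)) ih
    have hfd2 : Module.Finite F L.toSubmodule := hfd
    set d := Module.finrank F L.toSubmodule with hd
    have hinj : Function.Injective (fun i : Fin (d + 1) => b h + 2 * ((i : ℕ) : F)) := by
      intro i j hij
      simp only at hij
      have h3 := add_left_cancel hij
      have h4 := mul_left_cancel₀ (two_ne_zero (α := F)) h3
      exact Fin.ext (Nat.cast_injective h4)
    have hli : LinearIndependent F (fun i : Fin (d + 1) => X i) := by
      apply Module.End.eigenvectors_linearIndependent' (LieAlgebra.ad F G (h : G))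
        (fun i : Fin (d + 1) => b h + 2 * ((i : ℕ) : F)) hinj
      intro i
      constructor
      · rw [Module.End.mem_eigenspace_iff, LieAlgebra.ad_apply]
        exact hadh i
      · exact hall i
    have hli2 : LinearIndependent F (fun i : Fin (d + 1) =>
        (⟨X i, hXL i⟩ : L.toSubmodule)) := by
      apply LinearIndependent.of_comp L.toSubmodule.subtype
      exact hli
    have := hli2.fintype_card_le_finrank
    simp [← hd] at this
  have hXn : X (Nat.find hex) = 0 := Nat.find_spec hex
  have hnpos : Nat.find hex ≠ 0 := by
    intro h0
    apply hx0
    rw [← hX0]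
    rw [h0] at hXn
    exact hXn
  obtain ⟨m, hm⟩ := Nat.exists_eq_succ_of_ne_zero hnpos
  have hXm : X m ≠ 0 := Nat.find_min hex (by omega)
  -- the commutation relation
  have hrel : ∀ k, ⁅f, X (k + 1)⁆ = (-((k : F) + 1) * (b h + (k : F))) • X k := by
    intro k
    induction k with
    | zero =>
      have hb := (mem_wtSpace_iff H b x).mp hx h
      rw [hXs, leibniz_lie, hX0, hfx, lie_zero, add_zero, ← lie_skew f e, hef, neg_lie, hb]
      simp
    | succ k ih =>
      rw [hXs, leibniz_lie, ih, lie_smul, ← lie_skew f e, hef, neg_lie, hadh (k + 1),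
        ← hXs]
      rw [← neg_smul, ← add_smul]
      congr 1
      push_cast
      ring
  have hXn' : X (m + 1) = 0 := by rw [← Nat.succ_eq_add_one, ← hm]; exact hXn
  have h1 := hrel m
  rw [hXn', lie_zero] at h1
  have h2 : (-((m : F) + 1) * (b h + (m : F))) = 0 :=
    (smul_eq_zero.mp h1.symm).resolve_right hXm
  have h3 : b h + (m : F) = 0 := by
    rcases mul_eq_zero.mp h2 with h4 | h4
    · exact absurd (neg_eq_zero.mp h4) (Nat.cast_add_one_ne_zero m)
    · exact h4
  exact ⟨m, eq_neg_of_add_eq_zero_left h3⟩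

end Aux

/-- let `𝒢` be a locally finite split simple Lie algebra with
splitting Cartan subalgebra `H` and reduced irreducible locally finite root
system `R`.  Let `S` be an irreducible closed subsystem of `R`, let
`𝔤 = ⊕_{α ∈ S^×} 𝒢_α ⊕ Σ_{α ∈ S^×} [𝒢_α, 𝒢_{-α}]` and `𝔥 = H ∩ 𝔤`.  Then the
restriction map `π : H* → 𝔥*` is injective on `S`. -/
theorem stmt_12 {F G : Type*} [Field F] [CharZero F] [LieRing G] [LieAlgebra F G]
    [LieAlgebra.IsSimple F G]
    (H : LieSubalgebra F G) [H.IsCartanSubalgebra]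
    -- split: 𝒢 decomposes into weight spaces for H
    (hsplit : (⨆ χ : Module.Dual F H, (wtSpace H χ : Submodule F G)) = ⊤)
    -- locally finite: finitely generated subalgebras are finite dimensional
    (hlocfin : ∀ s : Finset G, FiniteDimensional F (LieSubalgebra.lieSpan F G (s : Set G)))
    -- the root system R of 𝒢 with respect to H
    (R : Set (Module.Dual F H))
    (hR : R = {α | (wtSpace H α : Submodule F G) ≠ ⊥})
    -- R is reduced
    (hreduced : ∀ α ∈ R, α ≠ 0 → (2 : F) • α ∉ R)
    -- coroots: for each nonzero root α there is h_α ∈ [𝒢_α, 𝒢_{-α}] with α(h_α) = 2,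
    -- and the corresponding reflections preserve R
    (hcor : Module.Dual F H → H)
    (hcor_mem : ∀ α ∈ R, α ≠ 0 →
      ((hcor α : G) ∈ Submodule.span F {x : G | ∃ u ∈ (wtSpace H α : Submodule F G),
          ∃ w ∈ (wtSpace H (-α) : Submodule F G), x = ⁅u, w⁆} ∧ α (hcor α) = 2))
    (hrefl : ∀ α ∈ R, α ≠ 0 → ∀ β ∈ R, β - β (hcor α) • α ∈ R)
    -- S is a subsystem of R ...
    (S : Set (Module.Dual F H)) (hSR : S ⊆ R) (hS0 : (0 : Module.Dual F H) ∈ S)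
    (hSrefl : ∀ α ∈ S, α ≠ 0 → ∀ β ∈ S, β - β (hcor α) • α ∈ S)
    -- ... which is closed ...
    (hSclosed : ∀ α ∈ S, ∀ β ∈ S, α + β ∈ R → α + β ∈ S)
    -- ... and irreducible: any two nonzero elements of S are connected
    (hSirr : ∀ α ∈ S, α ≠ 0 → ∀ β ∈ S, β ≠ 0 →
      ∃ (N : ℕ) (c : Fin (N + 1) → Module.Dual F H),
        c 0 = α ∧ c (Fin.last N) = β ∧ (∀ t, c t ∈ S ∧ c t ≠ 0) ∧
        ∀ t : Fin N, (c t.castSucc) (hcor (c t.succ)) ≠ 0) :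
    -- conclusion: restriction to 𝔥 = H ∩ 𝔤 is injective on S
    ∀ α ∈ S, ∀ β ∈ S,
      (∀ hh : H, (hh : G) ∈
          ((⨆ γ ∈ {γ : Module.Dual F H | γ ∈ S ∧ γ ≠ 0},
              (wtSpace H γ : Submodule F G)) ⊔
            Submodule.span F {x : G | ∃ γ : Module.Dual F H, γ ∈ S ∧ γ ≠ 0 ∧
              ∃ u ∈ (wtSpace H γ : Submodule F G),
                ∃ w ∈ (wtSpace H (-γ) : Submodule F G), x = ⁅u, w⁆}) →
        α hh = β hh) →
      α = β := by
  intro α hαS β hβS hagree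
  -- α and β agree on all coroots of nonzero elements of S
  have hag : ∀ γ ∈ S, γ ≠ 0 → α (hcor γ) = β (hcor γ) := by
    intro γ hγ hγ0
    apply hagree (hcor γ)
    apply Submodule.mem_sup_right
    have hsub : {x : G | ∃ u ∈ (wtSpace H γ : Submodule F G),
        ∃ w ∈ (wtSpace H (-γ) : Submodule F G), x = ⁅u, w⁆} ⊆
        {x : G | ∃ γ' : Module.Dual F H, γ' ∈ S ∧ γ' ≠ 0 ∧
          ∃ u ∈ (wtSpace H γ' : Submodule F G),
            ∃ w ∈ (wtSpace H (-γ') : Submodule F G), x = ⁅u, w⁆} := by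
      rintro x ⟨u, hu, w, hw, hx⟩
      exact ⟨γ, hγ, hγ0, u, hu, w, hw, hx⟩
    exact Submodule.span_mono hsub (hcor_mem γ (hSR hγ) hγ0).1
  have hval2 : ∀ γ ∈ S, γ ≠ 0 → γ (hcor γ) = 2 := fun γ hγ hγ0 =>
    (hcor_mem γ (hSR hγ) hγ0).2
  by_cases hα : α = 0
  · by_cases hβ : β = 0
    · rw [hα, hβ]
    · exfalso
      have h1 := hag β hβS hβ
      rw [hα, hval2 β hβS hβ] at h1
      simp at h1
  · by_cases hβ : β = 0
    · exfalso
      have h1 := hag α hαS hα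
      rw [hβ, hval2 α hαS hα] at h1
      simp at h1
    · -- both nonzero
      by_cases hne : α = β
      · exact hne
      exfalso
      have hβα : β (hcor α) = 2 := by rw [← hag α hαS hα]; exact hval2 α hαS hα
      -- δ = s_α β = β - 2α ∈ S
      have hδS : β - (2 : F) • α ∈ S := by
        have := hSrefl α hαS hα β hβS
        rwa [hβα] at this
      set δ := β - (2 : F) • α with hδdef
      have hδ0 : δ ≠ 0 := by
        intro h0
        rw [hδdef, sub_eq_zero] at h0
        exact hreduced α (hSR hαS) hα (h0 ▸ hSR hβS)
      have heq : α + δ = β - α := by rw [hδdef, two_smul]; abel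
      by_cases hba : β - α ∈ R
      · -- then β - α ∈ S and we get 2 = 0
        have hνS : β - α ∈ S := by
          have := hSclosed α hαS δ hδS (heq ▸ hba)
          rwa [heq] at this
        have hν0 : β - α ≠ 0 := sub_ne_zero.mpr (fun h => hne h.symm)
        have h2 := hval2 (β - α) hνS hν0
        rw [LinearMap.sub_apply, hag (β - α) hνS hν0] at h2
        simp at h2
      · -- β - α is not a root: the sl2 argument
        have hbot : (wtSpace H (β - α) : Submodule F G) = ⊥ := by
          rw [hR] at hba
          simpa using hba
        obtain ⟨hspan, hα2⟩ := hcor_mem α (hSR hαS) hα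
        -- extract a concrete sl2 triple
        have hextract : ∃ u ∈ (wtSpace H α : Submodule F G),
            ∃ w ∈ (wtSpace H (-α) : Submodule F G),
            ∃ hm : ⁅u, w⁆ ∈ H, α ⟨⁅u, w⁆, hm⟩ ≠ 0 := by
          by_contra hcon
          push_neg at hcon
          have hind : ∀ z ∈ Submodule.span F {x : G | ∃ u ∈ (wtSpace H α : Submodule F G),
              ∃ w ∈ (wtSpace H (-α) : Submodule F G), x = ⁅u, w⁆},
              ∃ hz : z ∈ H, α ⟨z, hz⟩ = 0 := by
            intro z hz
            induction hz using Submodule.span_induction with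
            | mem x hx =>
              obtain ⟨u, hu, w, hw, rfl⟩ := hx
              have hmem0 : ⁅u, w⁆ ∈ (wtSpace H (0 : Module.Dual F H) : Submodule F G) := by
                have := wtSpace_lie H α (-α) hu hw
                rwa [add_neg_cancel] at this
              have hmH : ⁅u, w⁆ ∈ H := wtSpace_zero_le H hmem0
              exact ⟨hmH, hcon u hu w hw hmH⟩
            | zero => exact ⟨H.zero_mem, by rw [show (⟨0, H.zero_mem⟩ : H) = 0 from rfl, map_zero]⟩
            | add x y hx hy ihx ihy =>
              obtain ⟨hx', hvx⟩ := ihx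
              obtain ⟨hy', hvy⟩ := ihy
              refine ⟨H.add_mem hx' hy', ?_⟩
              rw [show (⟨x + y, H.add_mem hx' hy'⟩ : H) = ⟨x, hx'⟩ + ⟨y, hy'⟩ from rfl,
                map_add, hvx, hvy, add_zero]
            | smul c x hx ihx =>
              obtain ⟨hx', hvx⟩ := ihx
              refine ⟨H.smul_mem c hx', ?_⟩
              rw [show (⟨c • x, H.smul_mem c hx'⟩ : H) = c • ⟨x, hx'⟩ from rfl,
                map_smul, hvx, smul_zero]
          obtain ⟨hz, hval⟩ := hind _ hspan
          rw [show (⟨(hcor α : G), hz⟩ : H) = hcor α from Subtype.ext rfl] at hval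
          rw [hval] at hα2
          exact two_ne_zero hα2.symm
        obtain ⟨u, hu, w, hw, hm, hc0⟩ := hextract
        set c := α ⟨⁅u, w⁆, hm⟩ with hcdef
        set e := u with hedef
        set f := (2 / c) • w with hfdef
        have hf : f ∈ (wtSpace H (-α) : Submodule F G) := Submodule.smul_mem _ _ hw
        set h : H := (2 / c) • (⟨⁅u, w⁆, hm⟩ : H) with hhdef
        have hef : ⁅e, f⁆ = (h : G) := by
          rw [hfdef, lie_smul, hhdef]
          rfl
        have hαh : α h = 2 := by
          rw [hhdef, map_smul, smul_eq_mul, ← hcdef, div_mul_cancel₀]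
          exact hc0
        -- weight vector for β
        have hβR : (wtSpace H β : Submodule F G) ≠ ⊥ := by
          have := hSR hβS
          rwa [hR] at this
        obtain ⟨x, hx, hx0⟩ := Submodule.exists_mem_ne_zero_of_ne_bot hβR
        have hfx : ⁅f, x⁆ = 0 := by
          have := wtSpace_lie H (-α) β hf hx
          rw [neg_add_eq_sub, hbot] at this
          simpa using this
        obtain ⟨n, hn⟩ := sl2_aux H hlocfin α β e f h hu hf hef hαh x hx hx0 hfx
        -- weight vector for δ
        have hδR : (wtSpace H δ : Submodule F G) ≠ ⊥ := by
          have := hSR hδS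
          rwa [hR] at this
        obtain ⟨y, hy, hy0⟩ := Submodule.exists_mem_ne_zero_of_ne_bot hδR
        have hey : ⁅e, y⁆ = 0 := by
          have := wtSpace_lie H α δ hu hy
          rw [heq, hbot] at this
          simpa using this
        have hfe : ⁅f, e⁆ = ((-h : H) : G) := by
          rw [← lie_skew, hef]
          simp
        have hf2 : e ∈ (wtSpace H (-(-α)) : Submodule F G) := by rwa [neg_neg]
        have hα2' : (-α) (-h) = 2 := by
          simp [hαh]
        obtain ⟨m, hm'⟩ := sl2_aux H hlocfin (-α) δ f e (-h) hf hf2 hfe hα2' y hy hy0 hey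
        -- numerics: δ h = β h - 4 = -n - 4 and δ h = m ≥ 0
        have hδh : δ h = (m : F) := by
          have h5 : (-(δ h)) = -(m : F) := by
            rw [← map_neg]
            exact hm'
          exact neg_injective h5
        have hδh2 : δ h = -(n : F) - 4 := by
          rw [hδdef, LinearMap.sub_apply, LinearMap.smul_apply, smul_eq_mul, hn, hαh]
          ring
        have hz : ((m + n + 4 : ℕ) : F) = 0 := by
          push_cast
          rw [← hδh, hδh2]
          ring
        have : (m + n + 4 : ℕ) = 0 := by exact_mod_cast hz
        omega
end
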